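/- arXiv:2009.11146 — 7 statements merged into one kernel-verified Lean document; each statement's English description precedes it below -/
import Mathlib

section
/- For every k₀, there exists a stochastic vector p_{k₀} ∈ ℝ^N with every entry at most c such that the backward product Ȳ_{k₀}^k := Y^k Y^{k−1} ⋯ Y^{k₀} converges to 𝟏 p_{k₀}ᵀ as k → ∞, and moreover ‖Ȳ_{k₀}^k − 𝟏 p_{k₀}ᵀ‖² ≤ 4N² μ^{k−k₀+1} for all k ≥ k₀, where μ := (1 − μ₀^{τH})^{2/(τH)}, ‖·‖ is the matrix spectral norm, and 𝟏 ∈ ℝ^N is the all-ones vector. -/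
/-!
In any window of `τ * H` consecutive factors some `A ∈ 𝔽` occurs at least `τ` times. As all
factors are nonnegative with positive diagonal, the window's product is positive wherever `A ^ τ`
is, so it has a column whose entries are all at least `μ₀ ^ (τ * H)`. Left multiplication by a
stochastic matrix with a column bounded below by `w` shrinks the range of every column of the right
factor by the factor `1 - w`, and no stochastic left factor widens it. So the column ranges of the
backward products are nested intervals of length at most `(1 - μ₀ ^ (τ * H)) ^ ⌊m / (τ * H)⌋`;
their common points form `p`, and the entrywise bound gives the spectral one through
`‖E‖ ≤ N max |E i j|`.
-/

open Finset Filter Topology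

/-- The backward product `Ȳ_{k₀}^k = Y^k Y^{k-1} ⋯ Y^{k₀}` of a sequence of matrices. -/
noncomputable def backProd {N : ℕ} (Y : ℕ → Matrix (Fin N) (Fin N) ℝ) (k₀ k : ℕ) :
    Matrix (Fin N) (Fin N) ℝ :=
  (((List.range (k - k₀ + 1)).map fun i => Y (k₀ + i)).reverse).prod

section BackwardProduct

variable {M : Type*} [Monoid M]

/-- `Y (a + b - 1) * ⋯ * Y (a + 1) * Y a`, a product of `b` factors. -/
def backwardProd (Y : ℕ → M) (a b : ℕ) : M :=
  (((List.range b).map fun i => Y (a + i)).reverse).prod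

@[simp]
theorem backwardProd_zero (Y : ℕ → M) (a : ℕ) : backwardProd Y a 0 = 1 := by
  simp [backwardProd]

theorem backwardProd_succ (Y : ℕ → M) (a b : ℕ) :
    backwardProd Y a (b + 1) = Y (a + b) * backwardProd Y a b := by
  simp [backwardProd, List.range_succ]

@[simp]
theorem backwardProd_one (Y : ℕ → M) (a : ℕ) : backwardProd Y a 1 = Y a := by
  simpa using backwardProd_succ Y a 0

theorem backwardProd_add (Y : ℕ → M) (a b c : ℕ) :
    backwardProd Y a (b + c) = backwardProd Y (a + b) c * backwardProd Y a b := by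
  induction c with
  | zero => simp
  | succ c ih => rw [← add_assoc, backwardProd_succ, ih, backwardProd_succ, add_assoc, mul_assoc]

theorem backwardProd_mem {S : Submonoid M} {Y : ℕ → M} (hY : ∀ k, Y k ∈ S) (a b : ℕ) :
    backwardProd Y a b ∈ S :=
  Submonoid.list_prod_mem _ (by simp [hY])

theorem backProd_eq_backwardProd {N : ℕ} (Y : ℕ → Matrix (Fin N) (Fin N) ℝ) (k₀ k : ℕ) :
    backProd Y k₀ k = backwardProd Y k₀ (k - k₀ + 1) :=
  rfl

end BackwardProduct

theorem Matrix.tendsto_of_abs_sub_le {ι m n : Type*} {l : Filter ι} {P : ι → Matrix m n ℝ}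
    {Q : Matrix m n ℝ} {ε : ι → ℝ} (h : ∀ t i j, |P t i j - Q i j| ≤ ε t)
    (hε : Tendsto ε l (𝓝 0)) : Tendsto P l (𝓝 Q) :=
  tendsto_pi_nhds.2 fun i => tendsto_pi_nhds.2 fun j =>
    tendsto_sub_nhds_zero_iff.1 (squeeze_zero_norm (fun t => h t i j) hε)

theorem tendsto_pow_div_atTop_nhds_zero {r : ℝ} (h₀ : 0 ≤ r) (h₁ : r < 1) {L : ℕ} (hL : L ≠ 0) :
    Tendsto (fun m : ℕ => r ^ (m / L)) atTop (𝓝 0) :=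
  (tendsto_pow_atTop_nhds_zero_of_lt_one h₀ h₁).comp (Nat.tendsto_div_const_atTop hL)

theorem List.exists_le_count_of_mul_card_le_length {α : Type*} [DecidableEq α] {s : Finset α}
    {l : List α} (hs : s.Nonempty) (hl : ∀ a ∈ l, a ∈ s) {m : ℕ} (h : m * #s ≤ l.length) :
    ∃ a ∈ s, m ≤ l.count a := by
  refine Finset.exists_le_of_sum_le hs ?_
  simp only [sum_const, smul_eq_mul, ← Multiset.coe_count]
  rw [Multiset.sum_count_eq_card (by simpa using hl), Multiset.coe_card]
  linarith

/-- Rounding `m / L` down costs at most one factor `x ^ 2 ≥ 1 / 4`. -/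
theorem sq_pow_div_le {x : ℝ} (hx₀ : 1 / 2 ≤ x) (hx₁ : x ≤ 1) {L : ℕ} (hL : 0 < L) (m : ℕ) :
    (x ^ (m / L)) ^ 2 ≤ 4 * (x ^ ((2 : ℝ) / L)) ^ m := by
  have hexp : (2 : ℝ) / L * m ≤ ((2 * (m / L + 1) : ℕ) : ℝ) := by
    have : (m : ℝ) ≤ L * (m / L + 1 : ℕ) := by exact_mod_cast (Nat.lt_mul_div_succ m hL).le
    rw [div_mul_eq_mul_div, div_le_iff₀ (by positivity)]
    push_cast at this ⊢
    nlinarith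
  calc (x ^ (m / L)) ^ 2 ≤ (x ^ (m / L)) ^ 2 * (4 * x ^ 2) := by
        refine le_mul_of_one_le_right (by positivity) ?_
        nlinarith
    _ = 4 * x ^ ((2 * (m / L + 1) : ℕ) : ℝ) := by rw [Real.rpow_natCast]; ring
    _ ≤ 4 * x ^ ((2 : ℝ) / L * m) := by
        gcongr 4 * ?_
        exact Real.rpow_le_rpow_of_exponent_ge (by linarith) hx₁ hexp
    _ = 4 * (x ^ ((2 : ℝ) / L)) ^ m := by
        rw [Real.rpow_mul (by linarith), Real.rpow_natCast]

namespace Matrix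

variable {n R : Type*} [Fintype n]

section Positivity

variable [Semiring R] [LinearOrder R] [IsStrictOrderedRing R]

theorem mul_apply_pos {A B : Matrix n n R} (hA : ∀ i j, 0 ≤ A i j) (hB : ∀ i j, 0 ≤ B i j)
    {i k j : n} (hik : 0 < A i k) (hkj : 0 < B k j) : 0 < (A * B) i j :=
  sum_pos' (fun l _ => mul_nonneg (hA i l) (hB l j)) ⟨k, mem_univ k, mul_pos hik hkj⟩

theorem exists_pos_of_mul_apply_pos {A B : Matrix n n R} (hA : ∀ i j, 0 ≤ A i j)
    (hB : ∀ i j, 0 ≤ B i j) {i j : n} (h : 0 < (A * B) i j) : ∃ k, 0 < A i k ∧ 0 < B k j := by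
  obtain ⟨k, -, hk⟩ := exists_lt_of_sum_lt (by simpa [mul_apply] using h :
    ∑ k, (0 : R) < ∑ k, A i k * B k j)
  exact ⟨k, (hA i k).lt_of_ne' fun h0 => by simp [h0] at hk,
    (hB k j).lt_of_ne' fun h0 => by simp [h0] at hk⟩

variable [DecidableEq n]

theorem list_prod_nonneg {l : List (Matrix n n R)} (hl : ∀ A ∈ l, ∀ i j, 0 ≤ A i j) :
    ∀ i j, 0 ≤ l.prod i j := by
  induction l with
  | nil => intro i j; by_cases h : i = j <;> simp [h]
  | cons A l ih =>
    intro i j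
    rw [List.prod_cons, mul_apply]
    exact sum_nonneg fun k _ => mul_nonneg (hl A (by simp) i k)
      (ih (fun B hB => hl B (by simp [hB])) k j)

theorem list_prod_apply_pos_of_sublist {l₁ l₂ : List (Matrix n n R)} (h : l₁.Sublist l₂)
    (hl₂ : ∀ A ∈ l₂, (∀ i j, 0 ≤ A i j) ∧ ∀ i, 0 < A i i) {i j : n} (hij : 0 < l₁.prod i j) :
    0 < l₂.prod i j := by
  induction h generalizing i j with
  | slnil => exact hij
  | cons A h ih =>
    have hl : ∀ B ∈ _, _ := fun B hB => hl₂ B (List.mem_cons_of_mem A hB)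
    rw [List.prod_cons]
    exact mul_apply_pos (hl₂ A (by simp)).1 (list_prod_nonneg fun B hB => (hl B hB).1)
      ((hl₂ A (by simp)).2 i) (ih hl hij)
  | cons_cons A h ih =>
    have hl : ∀ B ∈ _, _ := fun B hB => hl₂ B (List.mem_cons_of_mem A hB)
    rw [List.prod_cons] at hij ⊢
    obtain ⟨k, hik, hkj⟩ := exists_pos_of_mul_apply_pos (hl₂ A (by simp)).1
      (list_prod_nonneg fun B hB => (hl B (h.subset hB)).1) hij
    exact mul_apply_pos (hl₂ A (by simp)).1 (list_prod_nonneg fun B hB => (hl B hB).1) hik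
      (ih hl hkj)

theorem exists_forall_list_prod_apply_pos {𝔽 : Finset (Matrix n n R)} {τ : ℕ}
    (h𝔽 : ∀ A ∈ 𝔽, (∀ i j, 0 ≤ A i j) ∧ (∀ i, 0 < A i i) ∧ ∃ j, ∀ i, 0 < (A ^ τ) i j)
    (hne : 𝔽.Nonempty) {l : List (Matrix n n R)} (hl : ∀ A ∈ l, A ∈ 𝔽)
    (hlen : τ * #𝔽 ≤ l.length) : ∃ j, ∀ i, 0 < l.prod i j := by
  obtain ⟨M, hM, hcount⟩ := List.exists_le_count_of_mul_card_le_length hne hl hlen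
  obtain ⟨j, hj⟩ := (h𝔽 M hM).2.2
  refine ⟨j, fun i => list_prod_apply_pos_of_sublist (List.replicate_sublist_iff.2 hcount)
    (fun A hA => ⟨(h𝔽 A (hl A hA)).1, (h𝔽 A (hl A hA)).2.1⟩) ?_⟩
  rw [List.prod_replicate]
  exact hj i

theorem pow_length_le_list_prod_apply {l : List (Matrix n n R)} {α : R} (hα : 0 ≤ α)
    (hl : ∀ A ∈ l, (∀ i j, 0 ≤ A i j) ∧ ∀ i j, 0 < A i j → α ≤ A i j) {i j : n}
    (hij : 0 < l.prod i j) : α ^ l.length ≤ l.prod i j := by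
  induction l generalizing i j with
  | nil =>
    obtain rfl : i = j := by by_contra h; simp [h] at hij
    simp
  | cons A l ih =>
    have hl' : ∀ B ∈ l, _ := fun B hB => hl B (List.mem_cons_of_mem A hB)
    have hP := list_prod_nonneg fun B hB => (hl' B hB).1
    rw [List.prod_cons] at hij ⊢
    obtain ⟨k, hik, hkj⟩ := exists_pos_of_mul_apply_pos (hl A (by simp)).1 hP hij
    calc α ^ (A :: l).length = α * α ^ l.length := by simp [pow_succ']
      _ ≤ A i k * l.prod k j :=
        mul_le_mul ((hl A (by simp)).2 i k hik) (ih hl' hkj) (pow_nonneg hα _) hik.le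
      _ ≤ (A * l.prod) i j :=
        single_le_sum (fun k _ => mul_nonneg ((hl A (by simp)).1 i k) (hP k j)) (mem_univ k)

theorem exists_le_backwardProd_apply {𝔽 : Finset (Matrix n n R)} {τ : ℕ} {α : R} (hα : 0 ≤ α)
    (h𝔽 : ∀ A ∈ 𝔽, (∀ i j, 0 ≤ A i j) ∧ (∀ i, 0 < A i i) ∧ (∀ i j, 0 < A i j → α ≤ A i j) ∧
      ∃ j, ∀ i, 0 < (A ^ τ) i j)
    {Y : ℕ → Matrix n n R} (hY : ∀ k, Y k ∈ 𝔽) {L : ℕ} (hL : τ * #𝔽 ≤ L) (a : ℕ) :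
    ∃ j₀, ∀ i, α ^ L ≤ backwardProd Y a L i j₀ := by
  set l := ((List.range L).map fun i => Y (a + i)).reverse
  have hl : ∀ A ∈ l, A ∈ 𝔽 := by simp [l, hY]
  have hlen : l.length = L := by simp [l]
  obtain ⟨j₀, hj₀⟩ := exists_forall_list_prod_apply_pos
    (fun A hA => ⟨(h𝔽 A hA).1, (h𝔽 A hA).2.1, (h𝔽 A hA).2.2.2⟩) ⟨Y 0, hY 0⟩ hl (hlen ▸ hL)
  refine ⟨j₀, fun i => ?_⟩
  have := pow_length_le_list_prod_apply hα
    (fun A hA => ⟨(h𝔽 A (hl A hA)).1, (h𝔽 A (hl A hA)).2.2.1⟩) (hj₀ i)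
  rwa [hlen] at this

end Positivity

section ColumnRange

variable [Nonempty n]

section LinearOrder

variable [LinearOrder R]

def colMax (A : Matrix n n R) (j : n) : R := univ.sup' univ_nonempty fun i => A i j

def colMin (A : Matrix n n R) (j : n) : R := univ.inf' univ_nonempty fun i => A i j

theorem le_colMax (A : Matrix n n R) (i j : n) : A i j ≤ colMax A j :=
  le_sup' (fun i => A i j) (mem_univ i)

theorem colMin_le (A : Matrix n n R) (i j : n) : colMin A j ≤ A i j :=
  inf'_le (fun i => A i j) (mem_univ i)

theorem colMax_le {A : Matrix n n R} {j : n} {r : R} (h : ∀ i, A i j ≤ r) : colMax A j ≤ r :=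
  sup'_le _ _ fun i _ => h i

theorem le_colMin {A : Matrix n n R} {j : n} {r : R} (h : ∀ i, r ≤ A i j) : r ≤ colMin A j :=
  le_inf' _ _ fun i _ => h i

theorem colMin_le_colMax (A : Matrix n n R) (j : n) : colMin A j ≤ colMax A j :=
  (colMin_le A (Classical.arbitrary n) j).trans (le_colMax A _ j)

end LinearOrder

variable [CommRing R] [LinearOrder R] [IsStrictOrderedRing R]

def colOsc (A : Matrix n n R) (j : n) : R := colMax A j - colMin A j

theorem abs_sub_le_colOsc {A : Matrix n n R} {j : n} {x : R}
    (hx : x ∈ Set.Icc (colMin A j) (colMax A j)) (i : n) : |A i j - x| ≤ colOsc A j := by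
  have := colMin_le A i j
  have := le_colMax A i j
  rw [abs_le, colOsc]
  constructor <;> linarith [hx.1, hx.2]

variable [DecidableEq n]

theorem colOsc_le_one {A : Matrix n n R} (hA : A ∈ rowStochastic R n) (j : n) :
    colOsc A j ≤ 1 := by
  have := colMax_le fun i => le_one_of_mem_rowStochastic hA (i := i) (j := j)
  have := le_colMin fun i => nonneg_of_mem_rowStochastic hA (i := i) (j := j)
  rw [colOsc]
  linarith

theorem le_one_of_forall_le_apply {A : Matrix n n R} (hA : A ∈ rowStochastic R n) {w : R}
    {j₀ : n} (h : ∀ i, w ≤ A i j₀) : w ≤ 1 :=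
  (h (Classical.arbitrary n)).trans (le_one_of_mem_rowStochastic hA)

/-- Row `i` of `W * A` is an average of the rows of `A` giving weight at least `m` to row `j₀`. -/
theorem mul_apply_mem_Icc {W : Matrix n n R} (hW : W ∈ rowStochastic R n) {m : R} {j₀ : n}
    (hm : ∀ i, m ≤ W i j₀) (A : Matrix n n R) (i j : n) :
    (W * A) i j ∈
      Set.Icc (m * A j₀ j + (1 - m) * colMin A j) (m * A j₀ j + (1 - m) * colMax A j) := by
  set w : n → R := fun k => W i k - (Pi.single j₀ m : n → R) k
  have hw : ∀ k, 0 ≤ w k := by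
    intro k
    rcases eq_or_ne k j₀ with rfl | hk
    · simpa [w] using hm i
    · simpa [w, hk] using nonneg_of_mem_rowStochastic hW
  have hsum : ∑ k, w k = 1 - m := by
    simp [w, sum_sub_distrib, sum_row_of_mem_rowStochastic hW]
  have hWA : (W * A) i j = m * A j₀ j + ∑ k, w k * A k j := by
    simp [w, mul_apply, sub_mul, sum_sub_distrib, Pi.single_apply]
  rw [hWA, ← hsum, sum_mul, sum_mul]
  constructor
  · gcongr with k
    exacts [hw k, colMin_le A k j]
  · gcongr with k
    exacts [hw k, le_colMax A k j]

theorem colOsc_mul_le {W : Matrix n n R} (hW : W ∈ rowStochastic R n) {m : R} {j₀ : n}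
    (hm : ∀ i, m ≤ W i j₀) (A : Matrix n n R) (j : n) :
    colOsc (W * A) j ≤ (1 - m) * colOsc A j := by
  have := colMax_le fun i => (mul_apply_mem_Icc hW hm A i j).2
  have := le_colMin fun i => (mul_apply_mem_Icc hW hm A i j).1
  rw [colOsc, colOsc]
  linarith

theorem colMax_mul_le {W : Matrix n n R} (hW : W ∈ rowStochastic R n) (A : Matrix n n R)
    (j : n) : colMax (W * A) j ≤ colMax A j := by
  simpa using colMax_le fun i => (mul_apply_mem_Icc hW
    (fun i => nonneg_of_mem_rowStochastic hW (j := Classical.arbitrary n)) A i j).2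

theorem colMin_le_colMin_mul {W : Matrix n n R} (hW : W ∈ rowStochastic R n) (A : Matrix n n R)
    (j : n) : colMin A j ≤ colMin (W * A) j := by
  simpa using le_colMin fun i => (mul_apply_mem_Icc hW
    (fun i => nonneg_of_mem_rowStochastic hW (j := Classical.arbitrary n)) A i j).1

theorem colOsc_mul_le_colOsc {W : Matrix n n R} (hW : W ∈ rowStochastic R n) (A : Matrix n n R)
    (j : n) : colOsc (W * A) j ≤ colOsc A j := by
  simpa using colOsc_mul_le hW
    (fun i => nonneg_of_mem_rowStochastic hW (j := Classical.arbitrary n)) A j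

end ColumnRange

section Sequences

variable [CommRing R] [LinearOrder R] [IsStrictOrderedRing R] [DecidableEq n] [Nonempty n]
  {Y : ℕ → Matrix n n R}

theorem colOsc_backwardProd_le (hY : ∀ k, Y k ∈ rowStochastic R n) {L : ℕ} {w : R}
    (hwin : ∀ a, ∃ j₀, ∀ i, w ≤ backwardProd Y a L i j₀) (a m : ℕ) (j : n) :
    colOsc (backwardProd Y a m) j ≤ (1 - w) ^ (m / L) := by
  have hw : w ≤ 1 := le_one_of_forall_le_apply (backwardProd_mem hY 0 L) (hwin 0).choose_spec
  have hblocks : ∀ q, colOsc (backwardProd Y a (L * q)) j ≤ (1 - w) ^ q := by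
    intro q
    induction q with
    | zero => simpa using colOsc_le_one (one_mem _) j
    | succ q ih =>
      obtain ⟨j₀, hj₀⟩ := hwin (a + L * q)
      rw [Nat.mul_succ, backwardProd_add, pow_succ']
      exact (colOsc_mul_le (backwardProd_mem hY _ _) hj₀ _ j).trans
        (mul_le_mul_of_nonneg_left ih (sub_nonneg.2 hw))
  rw [← Nat.div_add_mod m L, backwardProd_add, Nat.div_add_mod]
  exact (colOsc_mul_le_colOsc (backwardProd_mem hY _ _) _ j).trans (hblocks _)

theorem monotone_colMin_backwardProd (hY : ∀ k, Y k ∈ rowStochastic R n) (a : ℕ) (j : n) :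
    Monotone fun m => colMin (backwardProd Y a m) j := by
  intro m m' h
  dsimp only
  rw [← Nat.add_sub_cancel' h, backwardProd_add]
  exact colMin_le_colMin_mul (backwardProd_mem hY _ _) _ j

theorem antitone_colMax_backwardProd (hY : ∀ k, Y k ∈ rowStochastic R n) (a : ℕ) (j : n) :
    Antitone fun m => colMax (backwardProd Y a m) j := by
  intro m m' h
  dsimp only
  rw [← Nat.add_sub_cancel' h, backwardProd_add]
  exact colMax_mul_le (backwardProd_mem hY _ _) _ j

end Sequences

section Limits

theorem isClosed_rowStochastic [Semiring R] [PartialOrder R] [IsOrderedRing R]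
    [TopologicalSpace R] [OrderClosedTopology R] [ContinuousAdd R] [DecidableEq n] :
    IsClosed (rowStochastic R n : Set (Matrix n n R)) := by
  have : (rowStochastic R n : Set (Matrix n n R)) =
      (⋂ i, ⋂ j, {A | 0 ≤ A i j}) ∩ ⋂ i, {A | ∑ j, A i j = 1} := by
    ext A
    simp [mem_rowStochastic_iff_sum]
  rw [this]
  refine .inter (isClosed_iInter fun i => isClosed_iInter fun j => ?_) (isClosed_iInter fun i => ?_)
  · exact isClosed_le continuous_const ((continuous_apply j).comp (continuous_apply i))
  · exact isClosed_eq (continuous_finsetSum _ fun j _ =>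
      (continuous_apply j).comp (continuous_apply i)) continuous_const

theorem vecMulVec_one_mem_rowStochastic_iff [Semiring R] [PartialOrder R] [IsOrderedRing R]
    [DecidableEq n] [Nonempty n] {p : n → R} :
    vecMulVec (fun _ => 1) p ∈ rowStochastic R n ↔ (∀ j, 0 ≤ p j) ∧ ∑ j, p j = 1 := by
  simp [mem_rowStochastic_iff_sum, vecMulVec_apply]

theorem exists_abs_backwardProd_sub_le [DecidableEq n] [Nonempty n] {Y : ℕ → Matrix n n ℝ}
    (hY : ∀ k, Y k ∈ rowStochastic ℝ n) {L : ℕ} {w : ℝ}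
    (hwin : ∀ a, ∃ j₀, ∀ i, w ≤ backwardProd Y a L i j₀) (a : ℕ) :
    ∃ p : n → ℝ,
      (∀ m j, p j ∈ Set.Icc (colMin (backwardProd Y a m) j) (colMax (backwardProd Y a m) j)) ∧
      ∀ m i j, |backwardProd Y a m i j - p j| ≤ (1 - w) ^ (m / L) := by
  have hp j := Set.mem_iInter.1 <|
    (monotone_colMin_backwardProd hY a j).ciSup_mem_iInter_Icc_of_antitone
      (antitone_colMax_backwardProd hY a j) fun m => colMin_le_colMax _ j
  exact ⟨_, fun m j => hp j m, fun m i j =>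
    (abs_sub_le_colOsc (hp j m) i).trans (colOsc_backwardProd_le hY hwin a m j)⟩

theorem exists_tendsto_backwardProd [DecidableEq n] [Nonempty n]
    {Y : ℕ → Matrix n n ℝ} (hY : ∀ k, Y k ∈ rowStochastic ℝ n) {L : ℕ} (hL : L ≠ 0) {w : ℝ}
    (hw : 0 < w) (hwin : ∀ a, ∃ j₀, ∀ i, w ≤ backwardProd Y a L i j₀) (a : ℕ) :
    ∃ p : n → ℝ, (∀ j, 0 ≤ p j) ∧ ∑ j, p j = 1 ∧ (∀ m j, p j ≤ colMax (backwardProd Y a m) j) ∧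
      (∀ m i j, |backwardProd Y a m i j - p j| ≤ (1 - w) ^ (m / L)) ∧
      Tendsto (backwardProd Y a) atTop (𝓝 (vecMulVec (fun _ => 1) p)) := by
  have hw₁ := le_one_of_forall_le_apply (backwardProd_mem hY 0 L) (hwin 0).choose_spec
  obtain ⟨p, hIcc, hdev⟩ := exists_abs_backwardProd_sub_le hY hwin a
  have hlim : Tendsto (backwardProd Y a) atTop (𝓝 (vecMulVec (fun _ => 1) p)) :=
    tendsto_of_abs_sub_le (fun m i j => by simpa [vecMulVec_apply] using hdev m i j)
      (tendsto_pow_div_atTop_nhds_zero (by linarith) (by linarith) hL)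
  obtain ⟨hp₀, hp₁⟩ := vecMulVec_one_mem_rowStochastic_iff.1 <|
    isClosed_rowStochastic.mem_of_tendsto hlim (.of_forall (backwardProd_mem hY a))
  exact ⟨p, hp₀, hp₁, fun m j => (hIcc m j).2, hdev, hlim⟩

end Limits

theorem norm_toEuclideanCLM_le {𝕜 : Type*} [RCLike 𝕜] [DecidableEq n] {A : Matrix n n 𝕜}
    {t : ℝ} (ht : 0 ≤ t) (h : ∀ i j, ‖A i j‖ ≤ t) :
    ‖toEuclideanCLM (𝕜 := 𝕜) (n := n) A‖ ≤ Fintype.card n * t := by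
  refine ContinuousLinearMap.opNorm_le_bound _ (by positivity) fun x => ?_
  have hrow : ∀ i, ‖(A *ᵥ x) i‖ ≤ t * ∑ j, ‖x j‖ := fun i => calc
    ‖(A *ᵥ x) i‖ ≤ ∑ j, ‖A i j‖ * ‖x j‖ := (norm_sum_le _ _).trans (by simp [norm_mul])
    _ ≤ ∑ j, t * ‖x j‖ := by gcongr with j; exact h i j
    _ = t * ∑ j, ‖x j‖ := by rw [mul_sum]
  have hl1 : (∑ j, ‖x j‖) ^ 2 ≤ Fintype.card n * ‖x‖ ^ 2 := by
    simpa [EuclideanSpace.norm_sq_eq] using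
      sq_sum_le_card_mul_sum_sq (s := univ) (f := fun j => ‖x j‖)
  refine le_of_sq_le_sq ?_ (by positivity)
  calc ‖toEuclideanCLM (𝕜 := 𝕜) (n := n) A x‖ ^ 2 = ∑ i, ‖(A *ᵥ x) i‖ ^ 2 := by
        simp [EuclideanSpace.norm_sq_eq]
    _ ≤ ∑ _i : n, (t * ∑ j, ‖x j‖) ^ 2 := by gcongr with i; exact hrow i
    _ = Fintype.card n * t ^ 2 * (∑ j, ‖x j‖) ^ 2 := by simp; ring
    _ ≤ Fintype.card n * t ^ 2 * (Fintype.card n * ‖x‖ ^ 2) := by gcongr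
    _ = (Fintype.card n * t * ‖x‖) ^ 2 := by ring

theorem sq_norm_toEuclideanCLM_le [DecidableEq n] {E : Matrix n n ℝ} {x : ℝ} (hx₀ : 1 / 2 ≤ x)
    (hx₁ : x ≤ 1) {L : ℕ} (hL : 0 < L) {m : ℕ} (h : ∀ i j, |E i j| ≤ x ^ (m / L)) :
    ‖toEuclideanCLM (𝕜 := ℝ) (n := n) E‖ ^ 2 ≤
      4 * (Fintype.card n : ℝ) ^ 2 * (x ^ ((2 : ℝ) / L)) ^ m := by
  have hnorm := norm_toEuclideanCLM_le (by positivity) fun i j =>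
    (Real.norm_eq_abs _).trans_le (h i j)
  calc _ ≤ (Fintype.card n * x ^ (m / L)) ^ 2 := by gcongr
    _ = (Fintype.card n : ℝ) ^ 2 * (x ^ (m / L)) ^ 2 := mul_pow _ _ _
    _ ≤ (Fintype.card n : ℝ) ^ 2 * (4 * (x ^ ((2 : ℝ) / L)) ^ m) := by
      gcongr
      exact sq_pow_div_le hx₀ hx₁ hL m
    _ = _ := by ring

end Matrix

open Matrix

theorem backward_product_convergence_general
    (N τ Hc : ℕ) (hN : 1 ≤ N) (hτ : 1 ≤ τ) (hH : 1 ≤ Hc)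
    (μ₀ c : ℝ) (hμ₀0 : 0 < μ₀) (hμ₀1 : μ₀ ≤ 1 / 2)
    (𝔽 : Finset (Matrix (Fin N) (Fin N) ℝ)) (hcard : 𝔽.card ≤ Hc)
    (h𝔽 : ∀ Y ∈ 𝔽,
      (∀ i j, 0 ≤ Y i j ∧ Y i j ≤ 1) ∧ (∀ i, ∑ j, Y i j = 1) ∧
      (∀ i, Y i i ≠ 0) ∧ (∀ i j, Y i j ≠ 0 → μ₀ ≤ Y i j) ∧
      (∀ i j, Y i j ≤ c) ∧ (∃ j, ∀ i, (Y ^ τ) i j ≠ 0))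
    (Y : ℕ → Matrix (Fin N) (Fin N) ℝ) (hY : ∀ k, Y k ∈ 𝔽) :
    ∀ k₀ : ℕ, ∃ p : Fin N → ℝ,
      (∀ i, 0 ≤ p i ∧ p i ≤ 1) ∧ (∑ i, p i = 1) ∧ (∀ i, p i ≤ c) ∧
      Filter.Tendsto (fun k => backProd Y k₀ k) Filter.atTop
        (nhds (Matrix.vecMulVec (fun _ => 1) p)) ∧
      ∀ k, k₀ ≤ k →
        ‖Matrix.toEuclideanCLM (𝕜 := ℝ) (n := Fin N)
            (backProd Y k₀ k - Matrix.vecMulVec (fun _ => 1) p)‖ ^ 2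
          ≤ 4 * (N : ℝ) ^ 2
            * (((1 - μ₀ ^ (τ * Hc)) ^ ((2 : ℝ) / ((τ : ℝ) * Hc))) ^ (k - k₀ + 1)) := by
  intro k₀
  have : Nonempty (Fin N) := ⟨⟨0, hN⟩⟩
  have hL : 0 < τ * Hc := Nat.mul_pos hτ hH
  have hst A (hA : A ∈ 𝔽) : A ∈ rowStochastic ℝ (Fin N) :=
    mem_rowStochastic_iff_sum.2 ⟨fun i j => ((h𝔽 A hA).1 i j).1, (h𝔽 A hA).2.1⟩
  have h𝔽pos : ∀ A ∈ 𝔽, (∀ i j, 0 ≤ A i j) ∧ (∀ i, 0 < A i i) ∧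
      (∀ i j, 0 < A i j → μ₀ ≤ A i j) ∧ ∃ j, ∀ i, 0 < (A ^ τ) i j := by
    intro A hA
    have hpos {B} (hB : B ∈ rowStochastic ℝ (Fin N)) {i j} (h : B i j ≠ 0) : 0 < B i j :=
      (nonneg_of_mem_rowStochastic hB).lt_of_ne' h
    obtain ⟨-, -, hdiag, hμ, -, j, hj⟩ := h𝔽 A hA
    exact ⟨fun i j => nonneg_of_mem_rowStochastic (hst A hA), fun i => hpos (hst A hA) (hdiag i),
      fun i j h => hμ i j h.ne', j, fun i => hpos (pow_mem (hst A hA) τ) (hj i)⟩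
  obtain ⟨p, hp₀, hp₁, hpc, hdev, hlim⟩ :=
    exists_tendsto_backwardProd (fun k => hst _ (hY k)) hL.ne' (pow_pos hμ₀0 _)
      (exists_le_backwardProd_apply hμ₀0.le h𝔽pos hY (Nat.mul_le_mul_left τ hcard)) k₀
  refine ⟨p, fun j => ⟨hp₀ j, hp₁ ▸ single_le_sum (fun j _ => hp₀ j) (mem_univ j)⟩, hp₁,
    fun j => (hpc 1 j).trans (colMax_le fun i => by simpa using (h𝔽 _ (hY k₀)).2.2.2.2.1 i j),
    hlim.comp ((tendsto_add_atTop_nat 1).comp (tendsto_sub_atTop_nat k₀)), fun k _ => ?_⟩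
  have hμ : μ₀ ^ (τ * Hc) ≤ 1 / 2 :=
    (pow_le_of_le_one hμ₀0.le (hμ₀1.trans (by norm_num)) hL.ne').trans hμ₀1
  have := sq_norm_toEuclideanCLM_le (x := 1 - μ₀ ^ (τ * Hc)) (m := k - k₀ + 1) (by linarith)
    (by linarith [pow_pos hμ₀0 (τ * Hc)]) hL (E := backProd Y k₀ k - vecMulVec (fun _ => 1) p)
    fun i j => by simpa [backProd_eq_backwardProd, vecMulVec_apply] using hdev (k - k₀ + 1) i j
  rw [Fintype.card_fin] at this
  exact_mod_cast this

/-- for every `k₀` there is a stochastic vector `p` with entries at most `c`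
such that the backward products `Ȳ_{k₀}^k` converge to `𝟏pᵀ`, with
`‖Ȳ_{k₀}^k - 𝟏pᵀ‖² ≤ 4N²μ^{k-k₀+1}` in the spectral norm, where
`μ = (1-μ₀^{τH})^{2/(τH)}`. -/
theorem backward_product_convergence
    (N τ Hc : ℕ) (hN : 1 ≤ N) (hτ : 1 ≤ τ) (hH : 1 ≤ Hc)
    (μ₀ c : ℝ) (hμ₀0 : 0 < μ₀) (hμ₀1 : μ₀ ≤ 1 / 2) (hc : 0 < c)
    (𝔽 : Finset (Matrix (Fin N) (Fin N) ℝ)) (hcard : 𝔽.card ≤ Hc)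
    (h𝔽 : ∀ Y ∈ 𝔽,
      (∀ i j, 0 ≤ Y i j ∧ Y i j ≤ 1) ∧ (∀ i, ∑ j, Y i j = 1) ∧
      (∀ i, Y i i ≠ 0) ∧ (∀ i j, Y i j ≠ 0 → μ₀ ≤ Y i j) ∧
      (∀ i j, Y i j ≤ c) ∧ (∃ j, ∀ i, (Y ^ τ) i j ≠ 0))
    (Y : ℕ → Matrix (Fin N) (Fin N) ℝ) (hY : ∀ k, Y k ∈ 𝔽) :
    ∀ k₀ : ℕ, ∃ p : Fin N → ℝ,
      (∀ i, 0 ≤ p i ∧ p i ≤ 1) ∧ (∑ i, p i = 1) ∧ (∀ i, p i ≤ c) ∧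
      Filter.Tendsto (fun k => backProd Y k₀ k) Filter.atTop
        (nhds (Matrix.vecMulVec (fun _ => 1) p)) ∧
      ∀ k, k₀ ≤ k →
        ‖Matrix.toEuclideanCLM (𝕜 := ℝ) (n := Fin N)
            (backProd Y k₀ k - Matrix.vecMulVec (fun _ => 1) p)‖ ^ 2
          ≤ 4 * (N : ℝ) ^ 2
            * (((1 - μ₀ ^ (τ * Hc)) ^ ((2 : ℝ) / ((τ : ℝ) * Hc))) ^ (k - k₀ + 1)) :=
  backward_product_convergence_general N τ Hc hN hτ hH μ₀ c hμ₀0 hμ₀1 𝔽 hcard h𝔽 Y hY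
end

section
/- For any θ_1, …, θ_N, θ' ∈ ℝ^D, the difference between the local and global increments is bounded as (1/N) Σ_{n=1}^N ‖g_n^k(θ_n) − ḡ^k(θ')‖² ≤ 2((1+γ)/(1−γλ))² (1/N) Σ_{n=1}^N ‖θ_n − θ'‖² + 2δ²/(1−γλ)². -/
open scoped RealInnerProductSpace

/-!
Writing `c = γφ^{k+1} − φ^k` and `z = z^k`, every increment is a scalar multiple of `z`, and
`g_n^k(θ_n) − ḡ^k(θ') = ((r_n^k − r̄^k) + ⟪c, θ_n − θ'⟫) z`. Hence, by `(a + b)² ≤ 2(a² + b²)`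
and Cauchy–Schwarz, its squared norm is at most `2‖z‖²((r_n^k − r̄^k)² + ‖c‖²‖θ_n − θ'‖²)`.
Averaging over `n` and using `‖c‖ ≤ 1 + γ` and `‖z‖ ≤ ∑_j (γλ)^j ≤ 1/(1 − γλ)` gives the bound.
-/

open Finset

theorem norm_sum_range_pow_smul_le {E : Type*} [SeminormedAddCommGroup E] [NormedSpace ℝ E]
    {a : ℝ} (ha0 : 0 ≤ a) (ha1 : a < 1) (k : ℕ) (φ : ℕ → E) (hφ : ∀ κ ≤ k, ‖φ κ‖ ≤ 1) :
    ‖∑ κ ∈ range (k + 1), a ^ (k - κ) • φ κ‖ ≤ 1 / (1 - a) := by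
  calc ‖∑ κ ∈ range (k + 1), a ^ (k - κ) • φ κ‖
      ≤ ∑ κ ∈ range (k + 1), a ^ (k - κ) := by
        refine (norm_sum_le _ _).trans (sum_le_sum fun κ hκ => ?_)
        rw [norm_smul, Real.norm_of_nonneg (pow_nonneg ha0 _)]
        exact mul_le_of_le_one_right (pow_nonneg ha0 _) (hφ κ (by grind))
    _ = ∑ j ∈ range (k + 1), a ^ j := by
        rw [← sum_range_reflect]
        exact sum_congr rfl fun j hj => by rw [Nat.add_sub_cancel, Nat.sub_sub_self (by grind)]
    _ ≤ 1 / (1 - a) := by simpa using geom_sum_Ico_le_of_lt_one (m := 0) (n := k + 1) ha0 ha1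

section InnerProductSpace

variable {E : Type*} [SeminormedAddCommGroup E] [InnerProductSpace ℝ E]

theorem smul_sub_inv_smul_sum_smul_eq {N : ℕ} (hN : N ≠ 0) (r : Fin N → ℝ) (a : ℝ)
    (c u u₀ z : E) :
    (a + ⟪c, u⟫) • z - (N : ℝ)⁻¹ • ∑ m, (r m + ⟪c, u₀⟫) • z
      = (a - (1 / N : ℝ) * ∑ m, r m + ⟪c, u - u₀⟫) • z := by
  rw [← sum_smul, smul_smul, ← sub_smul, sum_add_distrib, sum_const, card_univ,
    Fintype.card_fin, nsmul_eq_mul, inner_sub_right]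
  congr 1
  field_simp
  ring

theorem norm_add_inner_smul_sq_le (x : ℝ) (c v z : E) :
    ‖(x + ⟪c, v⟫) • z‖ ^ 2 ≤ 2 * ‖z‖ ^ 2 * (x ^ 2 + ‖c‖ ^ 2 * ‖v‖ ^ 2) := by
  have hcs : ⟪c, v⟫ ^ 2 ≤ ‖c‖ ^ 2 * ‖v‖ ^ 2 := by
    rw [← mul_pow, ← sq_abs]
    exact pow_le_pow_left₀ (abs_nonneg _) (abs_real_inner_le_norm c v) 2
  calc ‖(x + ⟪c, v⟫) • z‖ ^ 2 = ‖z‖ ^ 2 * (x + ⟪c, v⟫) ^ 2 := by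
        rw [norm_smul, mul_pow, Real.norm_eq_abs, sq_abs, mul_comm]
    _ ≤ ‖z‖ ^ 2 * (2 * (x ^ 2 + ⟪c, v⟫ ^ 2)) := by gcongr; exact add_sq_le
    _ ≤ ‖z‖ ^ 2 * (2 * (x ^ 2 + ‖c‖ ^ 2 * ‖v‖ ^ 2)) := by gcongr
    _ = _ := by ring

theorem mean_norm_add_inner_smul_sq_le {N : ℕ} (x : Fin N → ℝ) (c z : E) (v : Fin N → E) :
    (1 / N : ℝ) * ∑ n, ‖(x n + ⟪c, v n⟫) • z‖ ^ 2
      ≤ 2 * ‖z‖ ^ 2 * ((1 / N : ℝ) * ∑ n, x n ^ 2 + ‖c‖ ^ 2 * ((1 / N : ℝ) * ∑ n, ‖v n‖ ^ 2)) := by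
  calc (1 / N : ℝ) * ∑ n, ‖(x n + ⟪c, v n⟫) • z‖ ^ 2
      ≤ (1 / N : ℝ) * ∑ n, 2 * ‖z‖ ^ 2 * (x n ^ 2 + ‖c‖ ^ 2 * ‖v n‖ ^ 2) := by
        gcongr with n
        exact norm_add_inner_smul_sq_le _ _ _ _
    _ = _ := by
        rw [← mul_sum, sum_add_distrib, ← mul_sum]
        ring

end InnerProductSpace

theorem local_global_increment_bound_general
    (N D k : ℕ)
    (γ lam δ : ℝ) (hγ0 : 0 < γ) (hγ1 : γ < 1)
    (hlam0 : 0 ≤ lam) (hlam1 : lam ≤ 1)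
    (φ : ℕ → EuclideanSpace ℝ (Fin D)) (hφ : ∀ κ, κ ≤ k + 1 → ‖φ κ‖ ≤ 1)
    (r : Fin N → ℝ)
    (hvar : (1 / N : ℝ) * ∑ n, (r n - (1 / N : ℝ) * ∑ m, r m) ^ 2 ≤ δ ^ 2)
    (θ : Fin N → EuclideanSpace ℝ (Fin D)) (θ' : EuclideanSpace ℝ (Fin D)) :
    (1 / N : ℝ) * ∑ n,
        ‖(r n + ⟪γ • φ (k + 1) - φ k, θ n⟫) •
            (∑ κ ∈ Finset.range (k + 1), (γ * lam) ^ (k - κ) • φ κ)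
          - (N : ℝ)⁻¹ • ∑ m, (r m + ⟪γ • φ (k + 1) - φ k, θ'⟫) •
            (∑ κ ∈ Finset.range (k + 1), (γ * lam) ^ (k - κ) • φ κ)‖ ^ 2
      ≤ 2 * ((1 + γ) / (1 - γ * lam)) ^ 2 * ((1 / N : ℝ) * ∑ n, ‖θ n - θ'‖ ^ 2)
        + 2 * δ ^ 2 / (1 - γ * lam) ^ 2 := by
  have hγlam : γ * lam < 1 := by nlinarith
  set z := ∑ κ ∈ Finset.range (k + 1), (γ * lam) ^ (k - κ) • φ κ
  set c := γ • φ (k + 1) - φ k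
  set rMean := (1 / N : ℝ) * ∑ m, r m
  have hz : ‖z‖ ≤ 1 / (1 - γ * lam) :=
    norm_sum_range_pow_smul_le (by positivity) hγlam k φ fun κ hκ => hφ κ (by omega)
  have hc : ‖c‖ ≤ 1 + γ := by
    refine (norm_sub_le _ _).trans ?_
    rw [norm_smul, Real.norm_of_nonneg hγ0.le]
    linarith [mul_le_of_le_one_right hγ0.le (hφ (k + 1) le_rfl), hφ k (by omega)]
  calc (1 / N : ℝ) * ∑ n, ‖(r n + ⟪c, θ n⟫) • z - (N : ℝ)⁻¹ • ∑ m, (r m + ⟪c, θ'⟫) • z‖ ^ 2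
      = (1 / N : ℝ) * ∑ n, ‖(r n - rMean + ⟪c, θ n - θ'⟫) • z‖ ^ 2 := by
        congr 1
        exact sum_congr rfl fun n _ => by rw [smul_sub_inv_smul_sum_smul_eq n.pos.ne']
    _ ≤ 2 * ‖z‖ ^ 2 * ((1 / N : ℝ) * ∑ n, (r n - rMean) ^ 2
          + ‖c‖ ^ 2 * ((1 / N : ℝ) * ∑ n, ‖θ n - θ'‖ ^ 2)) :=
        mean_norm_add_inner_smul_sq_le _ _ _ _
    _ ≤ 2 * (1 / (1 - γ * lam)) ^ 2 * (δ ^ 2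
          + (1 + γ) ^ 2 * ((1 / N : ℝ) * ∑ n, ‖θ n - θ'‖ ^ 2)) := by
        gcongr
    _ = _ := by
        simp only [div_pow, one_pow]
        ring

/-- bound on the difference between local TD(λ) increments
`g_n^k(θ_n) = (r_n^k + ⟪γφ^{k+1} - φ^k, θ_n⟫) z^k` and the global increment
`ḡ^k(θ') = (1/N) ∑_n g_n^k(θ')`. -/
theorem local_global_increment_bound
    (N D k : ℕ) (hN : 1 ≤ N) (hD : 1 ≤ D)
    (γ lam δ : ℝ) (hγ0 : 0 < γ) (hγ1 : γ < 1)
    (hlam0 : 0 ≤ lam) (hlam1 : lam ≤ 1) (hδ : 0 ≤ δ)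
    (φ : ℕ → EuclideanSpace ℝ (Fin D)) (hφ : ∀ κ, κ ≤ k + 1 → ‖φ κ‖ ≤ 1)
    (r : Fin N → ℝ)
    (hvar : (1 / N : ℝ) * ∑ n, (r n - (1 / N : ℝ) * ∑ m, r m) ^ 2 ≤ δ ^ 2)
    (θ : Fin N → EuclideanSpace ℝ (Fin D)) (θ' : EuclideanSpace ℝ (Fin D)) :
    (1 / N : ℝ) * ∑ n,
        ‖(r n + ⟪γ • φ (k + 1) - φ k, θ n⟫) •
            (∑ κ ∈ Finset.range (k + 1), (γ * lam) ^ (k - κ) • φ κ)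
          - (N : ℝ)⁻¹ • ∑ m, (r m + ⟪γ • φ (k + 1) - φ k, θ'⟫) •
            (∑ κ ∈ Finset.range (k + 1), (γ * lam) ^ (k - κ) • φ κ)‖ ^ 2
      ≤ 2 * ((1 + γ) / (1 - γ * lam)) ^ 2 * ((1 / N : ℝ) * ∑ n, ‖θ n - θ'‖ ^ 2)
        + 2 * δ ^ 2 / (1 - γ * lam) ^ 2 :=
  local_global_increment_bound_general N D k γ lam δ hγ0 hγ1 hlam0 hlam1 φ hφ r hvar θ θ'
end

section
/- For all k ≥ 0, x^k ≤ (2α₂/(1−α₁)) (η^k)². -/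
/-! With `C = 2α₂/(1-α₁)` one has `α₁ C + α₂ = (1+α₁)/2 · C`, so one step of the recursion
shrinks the bound `C (η^k)²` by the factor `(1+α₁)/2`, while passing from `η^k` to `η^{k+1}`
inflates it by at most `2/(1+α₁)`. Hence `C (η^k)²` is a supersolution of the recursion, and
it dominates `x^k` by comparison, starting from `x⁰ ≤ α₂ (η⁰)² ≤ C (η⁰)²`. -/

theorem le_of_le_supersolution {a : ℝ} (ha : 0 ≤ a) {b x u : ℕ → ℝ}
    (hx : ∀ k, x (k + 1) ≤ a * x k + b k) (hu : ∀ k, a * u k + b k ≤ u (k + 1))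
    (h0 : x 0 ≤ u 0) : ∀ k, x k ≤ u k
  | 0 => h0
  | k + 1 => calc
      x (k + 1) ≤ a * x k + b k := hx k
      _ ≤ a * u k + b k := by gcongr; exact le_of_le_supersolution ha hx hu h0 k
      _ ≤ u (k + 1) := hu k

theorem sq_le_mul_sq_of_div_sq_le {a b c : ℝ} (hb : b ≠ 0) (h : (a / b) ^ 2 ≤ c) :
    a ^ 2 ≤ c * b ^ 2 := by
  rwa [div_pow, div_le_iff₀ (by positivity)] at h

/-- if `x^{k+1} ≤ α₁ x^k + α₂ (η^k)²`, `x⁰ ≤ α₂ (η⁰)²`, and the step sizes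
satisfy `1 ≤ (η^{k-1}/η^k)² ≤ 2/(1+α₁)`, then `x^k ≤ (2α₂/(1-α₁)) (η^k)²` for all `k`. -/
theorem recursion_bound
    (α₁ α₂ : ℝ) (hα₁0 : 0 < α₁) (hα₁1 : α₁ < 1) (hα₂ : 0 ≤ α₂)
    (η : ℕ → ℝ) (hη : ∀ k, 0 < η k)
    (hηr : ∀ k, 1 ≤ k → 1 ≤ (η (k - 1) / η k) ^ 2 ∧ (η (k - 1) / η k) ^ 2 ≤ 2 / (1 + α₁))
    (x : ℕ → ℝ)
    (hx : ∀ k, x (k + 1) ≤ α₁ * x k + α₂ * (η k) ^ 2)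
    (hx0 : x 0 ≤ α₂ * (η 0) ^ 2) :
    ∀ k, x k ≤ 2 * α₂ / (1 - α₁) * (η k) ^ 2 := by
  have h1α₁ : 0 < 1 - α₁ := by linarith
  have hα₂_le : α₂ ≤ 2 * α₂ / (1 - α₁) := by rw [le_div_iff₀ h1α₁]; nlinarith
  have hfixed : α₁ * (2 * α₂ / (1 - α₁)) + α₂ = (1 + α₁) / 2 * (2 * α₂ / (1 - α₁)) := by
    field_simp; ring
  have hη_sq (k : ℕ) : η k ^ 2 ≤ 2 / (1 + α₁) * η (k + 1) ^ 2 :=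
    sq_le_mul_sq_of_div_sq_le (hη _).ne' (by simpa using (hηr (k + 1) k.succ_pos).2)
  refine le_of_le_supersolution hα₁0.le hx (fun k => ?_) (hx0.trans (by gcongr))
  calc α₁ * (2 * α₂ / (1 - α₁) * η k ^ 2) + α₂ * η k ^ 2
      = (1 + α₁) / 2 * (2 * α₂ / (1 - α₁)) * η k ^ 2 := by rw [← hfixed]; ring
    _ ≤ (1 + α₁) / 2 * (2 * α₂ / (1 - α₁)) * (2 / (1 + α₁) * η (k + 1) ^ 2) := by
      gcongr; exact hη_sq k
    _ = 2 * α₂ / (1 - α₁) * η (k + 1) ^ 2 := by field_simp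
end

section
/- For every real ε > 0 and all integers k ≥ 1 and k⁰ ≥ 1 with ε ≤ k + k⁰, it holds that (ε/(k+k⁰)) Σ_{i=0}^{k} ((i+k⁰)/(k+k⁰))^{ε−1} ≤ 2. -/
/-!
Write `n = k + k₀`. After pulling out `n ^ (ε - 1)`, the claim is that `ε / n ^ ε` times
`∑ (i + k₀) ^ (ε - 1)` is at most `2`. The function `t ↦ t ^ (ε - 1)` is monotone, so all
terms of the sum but one are dominated by `∫_{k₀}^{n} t ^ (ε - 1) dt ≤ n ^ ε / ε`; the remaining
term (the last one if `ε ≥ 1`, the first one if `ε ≤ 1`) contributes at most `1` more.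
-/

open Finset

lemma div_mul_add_le_two {K : Type*} [Field K] [LinearOrder K] [IsStrictOrderedRing K]
    {ε N S T : K} (hε : 0 < ε) (hN : 0 < N) (hS : S ≤ N / ε)
    (hT : ε * T ≤ N) : ε / N * (S + T) ≤ 2 := by
  have hS' : ε * S ≤ N := by rwa [le_div_iff₀ hε, mul_comm] at hS
  rw [div_mul_eq_mul_div, div_le_iff₀ hN]
  linarith

namespace Real

lemma integral_rpow_le_div {a x y : ℝ} (ha : -1 < a) (hx : 0 ≤ x) :
    ∫ t in x..y, t ^ a ≤ y ^ (a + 1) / (a + 1) := by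
  rw [integral_rpow (Or.inl ha)]
  have : 0 ≤ x ^ (a + 1) := rpow_nonneg hx _
  gcongr
  · linarith
  · linarith

lemma sum_range_natCast_add_rpow_le {a x : ℝ} (ha : 0 ≤ a) (hx : 0 ≤ x) (m : ℕ) :
    ∑ i ∈ range m, ((i : ℝ) + x) ^ a ≤ ((m : ℝ) + x) ^ (a + 1) / (a + 1) := by
  have hmono : MonotoneOn (fun t : ℝ ↦ t ^ a) (Set.Icc x (x + m)) :=
    fun s hs t _ hst ↦ rpow_le_rpow (hx.trans hs.1) hst ha
  simpa only [add_comm _ x] using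
    hmono.sum_le_integral.trans (integral_rpow_le_div (by linarith) hx)

lemma sum_range_natCast_succ_add_rpow_le {a x : ℝ} (ha₁ : -1 < a) (ha : a ≤ 0) (hx : 0 < x)
    (m : ℕ) :
    ∑ i ∈ range m, (((i + 1 : ℕ) : ℝ) + x) ^ a ≤ ((m : ℝ) + x) ^ (a + 1) / (a + 1) := by
  have hanti : AntitoneOn (fun t : ℝ ↦ t ^ a) (Set.Icc x (x + m)) :=
    fun s hs t _ hst ↦ rpow_le_rpow_of_nonpos (hx.trans_le hs.1) hst ha
  simpa only [add_comm _ x] using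
    hanti.sum_le_integral.trans (integral_rpow_le_div ha₁ hx.le)

lemma div_mul_sum_div_rpow {n : ℝ} (hn : 0 < n) (ε : ℝ) (s : Finset ℕ) {x : ℕ → ℝ}
    (hx : ∀ i, 0 ≤ x i) :
    ε / n * ∑ i ∈ s, (x i / n) ^ (ε - 1) = ε / n ^ ε * ∑ i ∈ s, x i ^ (ε - 1) := by
  simp_rw [div_rpow (hx _) hn.le, ← sum_div, rpow_sub_one hn.ne']
  field_simp

end Real

open Real in
theorem rpow_sum_bound_general
    (ε : ℝ) (hε : 0 < ε) (k k₀ : ℕ) (hk₀ : 1 ≤ k₀)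
    (hεk : ε ≤ (k : ℝ) + k₀) :
    ε / ((k : ℝ) + k₀) *
        ∑ i ∈ Finset.range (k + 1), (((i : ℝ) + k₀) / ((k : ℝ) + k₀)) ^ (ε - 1) ≤ 2 := by
  have hk₀' : (1 : ℝ) ≤ k₀ := by exact_mod_cast hk₀
  have hn1 : 1 ≤ (k : ℝ) + k₀ := by linarith [k.cast_nonneg (α := ℝ)]
  have hn : 0 < (k : ℝ) + k₀ := by linarith
  rw [div_mul_sum_div_rpow hn ε _ fun i ↦ by positivity]
  set n : ℝ := k + k₀
  rcases le_total ε 1 with hε1 | hε1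
  · have hS := sum_range_natCast_succ_add_rpow_le (a := ε - 1) (by linarith) (by linarith)
      (by linarith : (0 : ℝ) < k₀) k
    rw [sub_add_cancel] at hS
    rw [sum_range_succ']
    refine div_mul_add_le_two hε (rpow_pos_of_pos hn ε) hS ?_
    calc ε * (((0 : ℕ) : ℝ) + k₀) ^ (ε - 1) ≤ 1 * 1 := by
          gcongr
          exact rpow_le_one_of_one_le_of_nonpos (by simpa using hk₀') (by linarith)
      _ ≤ n ^ ε := by simpa using one_le_rpow hn1 hε.le
  · have hS := sum_range_natCast_add_rpow_le (a := ε - 1) (by linarith)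
      (by linarith : (0 : ℝ) ≤ k₀) k
    rw [sub_add_cancel] at hS
    rw [sum_range_succ]
    refine div_mul_add_le_two hε (rpow_pos_of_pos hn ε) hS ?_
    calc ε * n ^ (ε - 1) ≤ n * n ^ (ε - 1) := by gcongr
      _ = n ^ ε := by rw [rpow_sub_one hn.ne']; field_simp

/-- for real `ε > 0` and integers `k, k⁰ ≥ 1` with `ε ≤ k + k⁰`,
`(ε/(k+k⁰)) ∑_{i=0}^{k} ((i+k⁰)/(k+k⁰))^{ε-1} ≤ 2`. -/
theorem rpow_sum_bound
    (ε : ℝ) (hε : 0 < ε) (k k₀ : ℕ) (hk : 1 ≤ k) (hk₀ : 1 ≤ k₀)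
    (hεk : ε ≤ (k : ℝ) + k₀) :
    ε / ((k : ℝ) + k₀) *
        ∑ i ∈ Finset.range (k + 1), (((i : ℝ) + k₀) / ((k : ℝ) + k₀)) ^ (ε - 1) ≤ 2 :=
  rpow_sum_bound_general ε hε k k₀ hk₀ hεk
end

section
/- For all reals η > 0 and ε ≥ 2 and all integers k⁰ and k with k⁰ ≥ η and k ≥ 0: Σ_{i=0}^k ((i+k⁰)/η)^{ε−2} ln((i+k⁰)/η) ≤ (η/(ε−1)²) ((ε−1) ln((k+1+k⁰)/η) + 1) ((k+1+k⁰)/η)^{ε−1}. -/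
/-!
The summand is `φ((i + k₀)/η)` with `φ u = u ^ (ε - 2) * log u`, which is monotone on `[1, ∞)`
since `ε ≥ 2`; as `k₀/η ≥ 1`, the sum is at most `∫_{k₀}^{k₀+k+1} φ(x/η) dx`. After substituting
`u = x/η`, this is `η` times an increment of the antiderivative
`u ^ (ε - 1) * ((ε - 1) * log u - 1) / (ε - 1) ^ 2` of `φ`, and the contribution of the lower
endpoint is absorbed by the `+ 1` in the bound.
-/

open Real Set

noncomputable def rpowLogAntideriv (p u : ℝ) : ℝ := u ^ p * (p * log u - 1) / p ^ 2

lemma monotoneOn_rpow_mul_log {q : ℝ} (hq : 0 ≤ q) :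
    MonotoneOn (fun u : ℝ => u ^ q * log u) (Ici 1) := by
  intro x (hx : 1 ≤ x) y _ hxy
  exact mul_le_mul (rpow_le_rpow (by linarith) hxy hq) (log_le_log (by linarith) hxy)
    (log_nonneg hx) (rpow_nonneg (by linarith) q)

lemma hasDerivAt_rpowLogAntideriv {p u : ℝ} (hp : p ≠ 0) (hu : 0 < u) :
    HasDerivAt (rpowLogAntideriv p) (u ^ (p - 1) * log u) u := by
  have h : HasDerivAt (rpowLogAntideriv p)
      ((1 * p * u ^ (p - 1) * (p * log u - 1) + u ^ p * (p * u⁻¹)) / p ^ 2) u :=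
    (((hasDerivAt_id u).rpow_const (Or.inl hu.ne')).mul
      (((hasDerivAt_log hu.ne').const_mul p).sub_const 1)).div_const (p ^ 2)
  refine h.congr_deriv ?_
  rw [rpow_sub_one hu.ne']
  field_simp
  ring

lemma integral_rpow_sub_one_mul_log {p a b : ℝ} (hp : p ≠ 0) (ha : 0 < a) (hb : 0 < b) :
    ∫ u in a..b, u ^ (p - 1) * log u = rpowLogAntideriv p b - rpowLogAntideriv p a := by
  have hpos : ∀ u ∈ uIcc a b, 0 < u := fun u hu => (lt_min ha hb).trans_le hu.1
  refine intervalIntegral.integral_eq_sub_of_hasDerivAt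
    (fun u hu => hasDerivAt_rpowLogAntideriv hp (hpos u hu)) (ContinuousOn.intervalIntegrable ?_)
  exact (continuousOn_id.rpow_const fun u hu => Or.inl (hpos u hu).ne').mul
    (continuousOn_log.mono fun u hu => (hpos u hu).ne')

lemma rpowLogAntideriv_sub_le {p a b : ℝ} (hp : 0 < p) (ha : 1 ≤ a) (hab : a ≤ b) :
    rpowLogAntideriv p b - rpowLogAntideriv p a ≤ (p * log b + 1) * b ^ p / p ^ 2 := by
  have hlog : 0 ≤ p * log a := mul_nonneg hp.le (log_nonneg ha)
  have hpow : a ^ p ≤ b ^ p := rpow_le_rpow (by linarith) hab hp.le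
  have ha_pow : 0 ≤ a ^ p := by positivity
  unfold rpowLogAntideriv
  rw [div_sub_div_same, div_le_div_iff_of_pos_right (by positivity)]
  nlinarith [mul_nonneg ha_pow hlog]

/-- for `η > 0`, `ε ≥ 2`, integers `k⁰ ≥ η` and `k ≥ 0`,
`∑_{i=0}^k ((i+k⁰)/η)^{ε-2} ln((i+k⁰)/η)
   ≤ (η/(ε-1)²)((ε-1) ln((k+1+k⁰)/η) + 1)((k+1+k⁰)/η)^{ε-1}`. -/
theorem log_sum_bound_eps_ge_two
    (η ε : ℝ) (hη : 0 < η) (hε : 2 ≤ ε) (k₀ k : ℕ) (hk₀ : η ≤ (k₀ : ℝ)) :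
    ∑ i ∈ Finset.range (k + 1),
        (((i : ℝ) + k₀) / η) ^ (ε - 2) * Real.log (((i : ℝ) + k₀) / η)
      ≤ η / (ε - 1) ^ 2 * ((ε - 1) * Real.log (((k : ℝ) + 1 + k₀) / η) + 1)
        * (((k : ℝ) + 1 + k₀) / η) ^ (ε - 1) := by
  have hp : 0 < ε - 1 := by linarith
  have ha : 1 ≤ (k₀ : ℝ) / η := (one_le_div hη).2 hk₀
  have hab : (k₀ : ℝ) / η ≤ (k₀ + (k + 1 : ℕ)) / η := by gcongr; simp only [le_add_iff_nonneg_right, Nat.cast_nonneg]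
  have hmono : MonotoneOn (fun x : ℝ => (x / η) ^ (ε - 1 - 1) * log (x / η))
      (Icc (k₀ : ℝ) (k₀ + (k + 1 : ℕ))) :=
    (monotoneOn_rpow_mul_log (by linarith)).comp
      (fun x _ y _ hxy => div_le_div_of_nonneg_right hxy hη.le)
      fun x hx => ha.trans (div_le_div_of_nonneg_right hx.1 hη.le)
  have hsum := hmono.sum_le_integral
  rw [intervalIntegral.integral_comp_div (fun u => u ^ (ε - 1 - 1) * log u) hη.ne',
    integral_rpow_sub_one_mul_log hp.ne' (by linarith) (by linarith)] at hsum
  calc ∑ i ∈ Finset.range (k + 1),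
        (((i : ℝ) + k₀) / η) ^ (ε - 2) * Real.log (((i : ℝ) + k₀) / η)
      ≤ η • (rpowLogAntideriv (ε - 1) ((k₀ + (k + 1 : ℕ)) / η)
          - rpowLogAntideriv (ε - 1) (k₀ / η)) := by
        convert hsum using 3 with i <;> ring_nf
    _ ≤ η * ((ε - 1) * log ((k₀ + (k + 1 : ℕ)) / η) + 1) * ((k₀ + (k + 1 : ℕ)) / η) ^ (ε - 1)
          / (ε - 1) ^ 2 := by
        rw [smul_eq_mul, mul_assoc, mul_div_assoc]
        exact mul_le_mul_of_nonneg_left (rpowLogAntideriv_sub_le hp ha hab) hη.le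
    _ = _ := by push_cast; ring_nf
end

section
/- For all reals η > 0 and 0 < ε < 1 and all integers k⁰ ≥ 2 with (k⁰−1)/η ≥ e^{1/(2−ε)}, and every integer k ≥ 0: Σ_{i=0}^k ((i+k⁰)/η)^{ε−2} ln((i+k⁰)/η) ≤ (η/(1−ε)²) ((1−ε) ln((k⁰−1)/η) + 1) ((k⁰−1)/η)^{ε−1}. -/
/-!
With `q = ε - 1`, the function `(q log t - 1) t^q / q²` is an antiderivative of
`g t = t^(ε-2) log t`, and `g` is decreasing once `log t ≥ 1/(2-ε)`. Hence each term
`g((i+k₀)/η)` is at most `η` times the increment of the antiderivative over the preceding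
interval of length `1/η`; the increments telescope, and the antiderivative is nonpositive
for `t ≥ 1`, leaving only its value at `(k₀-1)/η`.
-/

open Real Set Finset

theorem hasDerivAt_rpow_mul_log {p t : ℝ} (ht : 0 < t) :
    HasDerivAt (fun x => x ^ p * log x) ((p * log t + 1) * t ^ (p - 1)) t := by
  refine ((hasDerivAt_rpow_const (p := p) (Or.inl ht.ne')).mul
    (hasDerivAt_log ht.ne')).congr_deriv ?_
  rw [rpow_sub_one ht.ne']
  field_simp

theorem antitoneOn_rpow_mul_log {p : ℝ} (hp : p < 0) :
    AntitoneOn (fun x => x ^ p * log x) (Ici (exp (-p⁻¹))) := by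
  have hpos : ∀ x ∈ Ici (exp (-p⁻¹)), 0 < x := fun x hx => (exp_pos _).trans_le hx
  refine antitoneOn_of_hasDerivWithinAt_nonpos (convex_Ici _)
    (fun x hx => (hasDerivAt_rpow_mul_log (hpos x hx)).continuousAt.continuousWithinAt)
    (fun x hx => (hasDerivAt_rpow_mul_log (hpos x (interior_subset hx))).hasDerivWithinAt)
    fun x hx => ?_
  have hx' := interior_subset hx
  have hlog : -p⁻¹ ≤ log x := (le_log_iff_exp_le (hpos x hx')).2 hx'
  have hcoef : p * log x + 1 ≤ 0 := by
    have := mul_le_mul_of_nonpos_left hlog hp.le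
    rw [mul_neg, mul_inv_cancel₀ hp.ne] at this
    linarith
  exact mul_nonpos_of_nonpos_of_nonneg hcoef (rpow_nonneg (hpos x hx').le _)

theorem hasDerivAt_antideriv_rpow_mul_log {q t : ℝ} (hq : q ≠ 0) (ht : 0 < t) :
    HasDerivAt (fun x => (q * log x - 1) * x ^ q / q ^ 2) (t ^ (q - 1) * log t) t := by
  have h := (((hasDerivAt_rpow_mul_log (p := q) ht).const_mul q).sub
    (hasDerivAt_rpow_const (p := q) (Or.inl ht.ne'))).div_const (q ^ 2)
  have hfun : (fun x => (q * log x - 1) * x ^ q / q ^ 2)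
      = fun x => (q * (x ^ q * log x) - x ^ q) / q ^ 2 := by
    funext x
    ring
  rw [hfun]
  refine h.congr_deriv ?_
  field_simp
  ring

theorem antideriv_rpow_mul_log_nonpos {q t : ℝ} (hq : q ≤ 0) (ht : 1 ≤ t) :
    (q * log t - 1) * t ^ q / q ^ 2 ≤ 0 := by
  have hcoef : q * log t - 1 ≤ 0 := by nlinarith [log_nonneg ht]
  exact div_nonpos_of_nonpos_of_nonneg
    (mul_nonpos_of_nonpos_of_nonneg hcoef (rpow_nonneg (by linarith) _)) (sq_nonneg q)

section AntitoneSum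

variable {f F : ℝ → ℝ}

theorem mul_le_sub_of_hasDerivAt_of_antitoneOn {a b : ℝ} (hab : a ≤ b)
    (hF : ∀ x ∈ Icc a b, HasDerivAt F (f x) x) (hf : AntitoneOn f (Icc a b)) :
    f b * (b - a) ≤ F b - F a := by
  refine (convex_Icc a b).mul_sub_le_image_sub_of_le_deriv
    (fun x hx => (hF x hx).continuousAt.continuousWithinAt)
    (fun x hx => (hF x (interior_subset hx)).differentiableAt.differentiableWithinAt)
    (fun x hx => ?_) a (left_mem_Icc.2 hab) b (right_mem_Icc.2 hab) hab
  rw [interior_Icc] at hx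
  rw [(hF x (Ioo_subset_Icc_self hx)).deriv]
  exact hf (Ioo_subset_Icc_self hx) (right_mem_Icc.2 hab) hx.2.le

theorem mul_sum_le_sub_of_hasDerivAt_of_antitoneOn {a h : ℝ} (hh : 0 ≤ h)
    (hF : ∀ x ∈ Ici a, HasDerivAt F (f x) x) (hf : AntitoneOn f (Ici a)) (n : ℕ) :
    h * ∑ i ∈ range n, f (a + (i + 1) * h) ≤ F (a + n * h) - F a := by
  induction n with
  | zero => simp
  | succ n ih =>
    have hstart : a ≤ a + n * h := le_add_of_nonneg_right (mul_nonneg n.cast_nonneg hh)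
    have hstep := mul_le_sub_of_hasDerivAt_of_antitoneOn (f := f) (F := F)
      (le_add_of_nonneg_right hh : a + n * h ≤ a + n * h + h)
      (fun x hx => hF x (hstart.trans hx.1))
      (hf.mono fun x hx => hstart.trans hx.1)
    rw [sum_range_succ, Nat.cast_succ, show a + ((n : ℝ) + 1) * h = a + n * h + h by ring]
    linear_combination ih + hstep

end AntitoneSum

theorem log_sum_bound_eps_lt_one_general
    (η ε : ℝ) (hη : 0 < η) (hε1 : ε < 1) (k₀ k : ℕ)
    (hk₀' : Real.exp (1 / (2 - ε)) ≤ ((k₀ : ℝ) - 1) / η) :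
    ∑ i ∈ Finset.range (k + 1),
        (((i : ℝ) + k₀) / η) ^ (ε - 2) * Real.log (((i : ℝ) + k₀) / η)
      ≤ η / (1 - ε) ^ 2 * ((1 - ε) * Real.log (((k₀ : ℝ) - 1) / η) + 1)
        * (((k₀ : ℝ) - 1) / η) ^ (ε - 1) := by
  set a := ((k₀ : ℝ) - 1) / η
  set G : ℝ → ℝ := fun x => ((ε - 1) * log x - 1) * x ^ (ε - 1) / (ε - 1) ^ 2
  have ha : exp (-(ε - 2)⁻¹) ≤ a := by
    rwa [neg_inv, neg_sub, ← one_div]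
  have hpos : ∀ x ∈ Ici a, 0 < x := fun x hx => (exp_pos _).trans_le (ha.trans hx)
  have hG : ∀ x ∈ Ici a, HasDerivAt G (x ^ (ε - 2) * log x) x := fun x hx => by
    simpa [show ε - 1 - 1 = ε - 2 by ring] using
      hasDerivAt_antideriv_rpow_mul_log (sub_ne_zero.2 hε1.ne) (hpos x hx)
  have hsum := mul_sum_le_sub_of_hasDerivAt_of_antitoneOn (inv_pos.2 hη).le hG
    ((antitoneOn_rpow_mul_log (by linarith)).mono (Ici_subset_Ici.2 ha)) (k + 1)
  have hterm : ∀ i : ℕ, a + (i + 1) * η⁻¹ = ((i : ℝ) + k₀) / η := fun i => by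
    simp only [a]
    field_simp
    ring
  have hend : G (a + (k + 1 : ℕ) * η⁻¹) ≤ 0 := antideriv_rpow_mul_log_nonpos (by linarith)
    ((one_le_exp (neg_nonneg.2 (inv_nonpos.2 (by linarith)))).trans
      (ha.trans (le_add_of_nonneg_right (by positivity))))
  have hbound : η / (1 - ε) ^ 2 * ((1 - ε) * log a + 1) * a ^ (ε - 1) = η * -G a := by
    simp only [G]
    rw [show (ε - 1) ^ 2 = (1 - ε) ^ 2 by ring]
    ring
  simp only [hterm] at hsum
  rw [hbound, ← inv_mul_le_iff₀ hη]
  linarith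

/-- for `η > 0`, `0 < ε < 1`, integers `k⁰ ≥ 2` with
`(k⁰-1)/η ≥ e^{1/(2-ε)}`, and every integer `k ≥ 0`,
`∑_{i=0}^k ((i+k⁰)/η)^{ε-2} ln((i+k⁰)/η)
   ≤ (η/(1-ε)²)((1-ε) ln((k⁰-1)/η) + 1)((k⁰-1)/η)^{ε-1}`. -/
theorem log_sum_bound_eps_lt_one
    (η ε : ℝ) (hη : 0 < η) (hε0 : 0 < ε) (hε1 : ε < 1) (k₀ k : ℕ) (hk₀ : 2 ≤ k₀)
    (hk₀' : Real.exp (1 / (2 - ε)) ≤ ((k₀ : ℝ) - 1) / η) :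
    ∑ i ∈ Finset.range (k + 1),
        (((i : ℝ) + k₀) / η) ^ (ε - 2) * Real.log (((i : ℝ) + k₀) / η)
      ≤ η / (1 - ε) ^ 2 * ((1 - ε) * Real.log (((k₀ : ℝ) - 1) / η) + 1)
        * (((k₀ : ℝ) - 1) / η) ^ (ε - 1) :=
  log_sum_bound_eps_lt_one_general η ε hη hε1 k₀ k hk₀'
end

section
/- Σ_{d=1}^D ⟨p(d) − (1/N)𝟏, V_d⟩² ≤ (c − 1/N) Σ_{n=1}^N ‖v_n − v̄‖², where 𝟏 ∈ ℝ^N is the all-ones vector. -/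
/-! Subtracting the uniform distribution turns `p(d)` into a weight vector `q` with zero sum, so
`⟨q, V_d⟩ = ⟨q, V_d - v̄_d 𝟏⟩`, and Cauchy–Schwarz bounds its square by `‖q‖² ‖V_d - v̄_d 𝟏‖²`.
Finally `‖q‖² = ‖p(d)‖² - 1/N ≤ c - 1/N`, since `∑ p² ≤ c ∑ p = c`; summing over `d` gives the
claim. -/

open Finset

section Centering

variable {ι : Type*} [Fintype ι]

theorem sum_mul_sub_eq_of_sum_eq_zero {q : ι → ℝ} (hq : ∑ i, q i = 0) (x : ι → ℝ) (a : ℝ) :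
    ∑ i, q i * (x i - a) = ∑ i, q i * x i := by
  simp only [mul_sub, sum_sub_distrib, ← sum_mul, hq, zero_mul, sub_zero]

theorem sq_sum_mul_le_of_sum_eq_zero {q : ι → ℝ} (hq : ∑ i, q i = 0) (x : ι → ℝ) (a : ℝ) :
    (∑ i, q i * x i) ^ 2 ≤ (∑ i, q i ^ 2) * ∑ i, (x i - a) ^ 2 := by
  rw [← sum_mul_sub_eq_of_sum_eq_zero hq x a]
  exact sum_mul_sq_le_sq_mul_sq univ q (fun i => x i - a)

end Centering

section Stochastic

variable {ι : Type*} [Fintype ι] {p : ι → ℝ}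

theorem card_ne_zero_of_sum_eq_one (hp : ∑ i, p i = 1) : (Fintype.card ι : ℝ) ≠ 0 := by
  have : Nonempty ι := by
    by_contra h
    simp [not_nonempty_iff.mp h] at hp
  exact_mod_cast Fintype.card_ne_zero

theorem sum_sub_inv_card_eq_zero (hp : ∑ i, p i = 1) :
    ∑ i, (p i - 1 / Fintype.card ι) = 0 := by
  simp [sum_sub_distrib, hp, card_ne_zero_of_sum_eq_one hp]

theorem sum_sq_sub_inv_card_eq (hp : ∑ i, p i = 1) :
    ∑ i, (p i - 1 / Fintype.card ι) ^ 2 = ∑ i, p i ^ 2 - 1 / Fintype.card ι := by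
  have hcard := card_ne_zero_of_sum_eq_one hp
  simp only [sub_sq, sum_add_distrib, sum_sub_distrib, ← sum_mul, ← mul_sum, hp, sum_const,
    card_univ, nsmul_eq_mul]
  field_simp
  ring

theorem sum_sq_le_of_forall_le (hp0 : ∀ i, 0 ≤ p i) (hp : ∑ i, p i = 1) {c : ℝ} (hpc : ∀ i, p i ≤ c) :
    ∑ i, p i ^ 2 ≤ c :=
  calc ∑ i, p i ^ 2 ≤ ∑ i, c * p i :=
        sum_le_sum fun i _ => by rw [sq]; exact mul_le_mul_of_nonneg_right (hpc i) (hp0 i)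
    _ = c := by rw [← mul_sum, hp, mul_one]

theorem sum_sq_sub_inv_card_le (hp0 : ∀ i, 0 ≤ p i) (hp : ∑ i, p i = 1) {c : ℝ}
    (hpc : ∀ i, p i ≤ c) :
    ∑ i, (p i - 1 / Fintype.card ι) ^ 2 ≤ c - 1 / Fintype.card ι := by
  rw [sum_sq_sub_inv_card_eq hp]
  linarith [sum_sq_le_of_forall_le hp0 hp hpc]

end Stochastic

theorem EuclideanSpace.norm_sub_smul_sum_sq {ι κ : Type*} [Fintype ι] [Fintype κ]
    (V : ι → EuclideanSpace ℝ κ) (a : ℝ) (i : ι) :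
    ‖V i - a • ∑ j, V j‖ ^ 2 = ∑ k, (V i k - a * ∑ j, V j k) ^ 2 := by
  simp [EuclideanSpace.norm_sq_eq]

theorem weighted_column_deviation_bound_general
    (N D : ℕ) (c : ℝ)
    (V : Fin N → EuclideanSpace ℝ (Fin D))
    (p : Fin D → Fin N → ℝ)
    (hp01 : ∀ d i, 0 ≤ p d i ∧ p d i ≤ 1)
    (hsum : ∀ d, ∑ i, p d i = 1)
    (hpc : ∀ d i, p d i ≤ c) :
    ∑ d, (∑ n, (p d n - 1 / N) * V n d) ^ 2
      ≤ (c - 1 / N) * ∑ n, ‖V n - (N : ℝ)⁻¹ • ∑ m, V m‖ ^ 2 := by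
  have hcol : ∀ d, (∑ n, (p d n - 1 / N) * V n d) ^ 2
      ≤ (c - 1 / N) * ∑ n, (V n d - (N : ℝ)⁻¹ * ∑ m, V m d) ^ 2 := by
    intro d
    have hq := sum_sub_inv_card_eq_zero (hsum d)
    have hq2 := sum_sq_sub_inv_card_le (fun i => (hp01 d i).1) (hsum d) (hpc d)
    rw [Fintype.card_fin] at hq hq2
    exact (sq_sum_mul_le_of_sum_eq_zero hq _ _).trans
      (mul_le_mul_of_nonneg_right hq2 (sum_nonneg fun _ _ => sq_nonneg _))
  calc _ ≤ ∑ d, (c - 1 / N) * ∑ n, (V n d - (N : ℝ)⁻¹ * ∑ m, V m d) ^ 2 :=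
        sum_le_sum fun d _ => hcol d
    _ = _ := by
      simp only [← mul_sum, EuclideanSpace.norm_sub_smul_sum_sq]
      rw [sum_comm]

/-- for stochastic vectors `p(d)` with entries at most `c`, and a matrix
`V` with rows `v_n` and columns `V_d`,
`∑_d ⟨p(d) - (1/N)𝟏, V_d⟩² ≤ (c - 1/N) ∑_n ‖v_n - v̄‖²` where `v̄ = (1/N)∑_n v_n`. -/
theorem weighted_column_deviation_bound
    (N D : ℕ) (hN : 1 ≤ N) (hD : 1 ≤ D) (c : ℝ) (hc : 0 < c)
    (V : Fin N → EuclideanSpace ℝ (Fin D))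
    (p : Fin D → Fin N → ℝ)
    (hp01 : ∀ d i, 0 ≤ p d i ∧ p d i ≤ 1)
    (hsum : ∀ d, ∑ i, p d i = 1)
    (hpc : ∀ d i, p d i ≤ c) :
    ∑ d, (∑ n, (p d n - 1 / N) * V n d) ^ 2
      ≤ (c - 1 / N) * ∑ n, ‖V n - (N : ℝ)⁻¹ • ∑ m, V m‖ ^ 2 :=
  weighted_column_deviation_bound_general N D c V p hp01 hsum hpc
end
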